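/- arXiv:math/0502182 — 4 statements merged into one kernel-verified Lean document; each statement's English description precedes it below -/
import Mathlib

section
/- Let (b_n)_{n≥1} be a nondecreasing sequence of positive reals tending to +∞ and (a_n)_{n≥1} a real sequence. If liminf_{n→∞} Σ_{k=1}^n a_k/b_k is finite, then liminf_{n→∞} (1/b_n) Σ_{k=1}^n a_k ≤ 0. -/
/-!
With `S n = ∑_{k ≤ n} a k / b k`, summation by parts gives
`(1 / b n) ∑_{k ≤ n} a k = S n - (1 / b n) ∑_{k < n} (b (k+1) - b k) S k`.
The subtracted term is an average of the `S k` with weights the increments of `b`; since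
`b → ∞` it eventually exceeds `liminf S - ε`, while `S n ≤ liminf S + ε` infinitely often.
-/

open Filter Finset

theorem Finset.sum_Icc_mul_by_parts {R : Type*} [CommRing R] (b c : ℕ → R) (n : ℕ) :
    ∑ k ∈ Icc 1 n, b k * c k
      = b n * ∑ k ∈ Icc 1 n, c k - ∑ k ∈ range n, (b (k + 1) - b k) * ∑ j ∈ Icc 1 k, c j := by
  induction n with
  | zero => simp
  | succ n ih =>
    rw [sum_Icc_succ_top (by omega), ih, sum_range_succ, sum_Icc_succ_top (by omega)]
    ring

theorem eventually_mul_le_sum_range_mul_sub {b S : ℕ → ℝ} {m m' : ℝ} (hb : Monotone b)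
    (hbtop : Tendsto b atTop atTop) (hS : ∀ᶠ k in atTop, m ≤ S k) (hm : m' < m) :
    ∀ᶠ n in atTop, m' * b n ≤ ∑ k ∈ range n, (b (k + 1) - b k) * S k := by
  obtain ⟨N, hN⟩ := eventually_atTop.1 hS
  set C := ∑ k ∈ range N, (b (k + 1) - b k) * S k
  filter_upwards [hbtop.eventually_ge_atTop ((m * b N - C) / (m - m')), eventually_ge_atTop N]
    with n hbn hNn
  have htail : (b n - b N) * m ≤ ∑ k ∈ Ico N n, (b (k + 1) - b k) * S k := by
    calc (b n - b N) * m = ∑ k ∈ Ico N n, (b (k + 1) - b k) * m := by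
          rw [← sum_mul, sum_Ico_sub b hNn]
      _ ≤ _ := sum_le_sum fun k hk ↦ mul_le_mul_of_nonneg_left
          (hN k (mem_Ico.1 hk).1) (sub_nonneg.2 (hb k.le_succ))
  have hlarge : m * b N - C ≤ b n * (m - m') := (div_le_iff₀ (sub_pos.2 hm)).1 hbn
  rw [← sum_range_add_sum_Ico _ hNn]
  linarith

theorem liminf_coe_le_of_frequently_le {u : ℕ → ℝ} {x : ℝ}
    (h : ∀ ε > 0, ∃ᶠ n in atTop, u n ≤ x + ε) :
    liminf (fun n ↦ (u n : EReal)) atTop ≤ x := by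
  refine le_of_forall_gt_imp_ge_of_dense fun c hc ↦ ?_
  obtain ⟨r, hxr, hrc⟩ := EReal.lt_iff_exists_real_btwn.1 hc
  have hxr : x < r := EReal.coe_lt_coe_iff.1 hxr
  refine (liminf_le_of_frequently_le' ((h (r - x) (sub_pos.2 hxr)).mono fun n hn ↦ ?_)).trans
    hrc.le
  exact EReal.coe_le_coe_iff.2 (by linarith)

/-- "À la Kronecker" lemma: if `(b n)` is nondecreasing, positive, tending to `+∞`,
and `liminf_n ∑_{k=1}^n a k / b k` is finite, then
`liminf_n (1 / b n) * ∑_{k=1}^n a k ≤ 0` (in `EReal`, so finiteness issues are handled). -/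
theorem kronecker_variant (a b : ℕ → ℝ)
    (hbpos : ∀ n, 1 ≤ n → 0 < b n)
    (hbmono : ∀ n, b n ≤ b (n + 1))
    (hbtop : Filter.Tendsto b Filter.atTop Filter.atTop)
    (hfin : ∃ L : ℝ,
      Filter.liminf (fun n => ((∑ k ∈ Finset.Icc 1 n, a k / b k : ℝ) : EReal))
        Filter.atTop = (L : EReal)) :
    Filter.liminf (fun n => (((1 / b n) * ∑ k ∈ Finset.Icc 1 n, a k : ℝ) : EReal))
      Filter.atTop ≤ (0 : EReal) := by
  obtain ⟨L, hL⟩ := hfin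
  set S := fun n ↦ ∑ k ∈ Icc 1 n, a k / b k
  have hsum : ∀ n, ∑ k ∈ Icc 1 n, a k
      = b n * S n - ∑ k ∈ range n, (b (k + 1) - b k) * S k := fun n ↦ by
    rw [← sum_Icc_mul_by_parts]
    exact sum_congr rfl fun k hk ↦ (mul_div_cancel₀ _ (hbpos k (mem_Icc.1 hk).1).ne').symm
  refine liminf_coe_le_of_frequently_le fun ε hε ↦ ?_
  have hS_low : ∀ᶠ n in atTop, L - ε / 4 ≤ S n := by
    have : ((L - ε / 4 : ℝ) : EReal) < liminf (fun n ↦ (S n : EReal)) atTop := by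
      rw [hL]; exact EReal.coe_lt_coe_iff.2 (by linarith)
    exact (eventually_lt_of_lt_liminf this).mono fun n hn ↦ (EReal.coe_lt_coe_iff.1 hn).le
  have hS_up : ∃ᶠ n in atTop, S n ≤ L + ε / 2 := by
    have : liminf (fun n ↦ (S n : EReal)) atTop < ((L + ε / 2 : ℝ) : EReal) := by
      rw [hL]; exact EReal.coe_lt_coe_iff.2 (by linarith)
    exact (frequently_lt_of_liminf_lt (by isBoundedDefault) this).mono
      fun n hn ↦ (EReal.coe_lt_coe_iff.1 hn).le
  have hweighted := eventually_mul_le_sum_range_mul_sub (monotone_nat_of_le_succ hbmono) hbtop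
    hS_low (by linarith : L - ε / 2 < L - ε / 4)
  refine (hS_up.and_eventually (hweighted.and (eventually_ge_atTop 1))).mono ?_
  rintro n ⟨hSn, hAn, hn⟩
  have hbn := hbpos n hn
  rw [hsum, one_div, inv_mul_le_iff₀ hbn]
  nlinarith [mul_le_mul_of_nonneg_left hSn hbn.le]
end

section
/- Assume there is Φ : S_d → ℝ, continuously differentiable on the interior of S_d with ∇Φ extending continuously to S_d, such that ∇Φ(v) = (f_i(ṽ) − f_0(ṽ))_{1≤i≤d} for all v ∈ S_d, where ṽ := (1 − Σ v_i, v_1, …, v_d). Then for every strategy x ∈ {0,…,d}^{ℕ*}, Q(x) := liminf_n (1/n) Σ_{k=0}^{n−1} f_{x_{k+1}}(bar x_k) satisfies Q(x) ≤ Q* := max_{u ∈ P_{d+1}} q(u), where q(u) := Σ_{i=0}^d u_i f_i(u). -/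
noncomputable section

/-- The simplex `S_d = {v ∈ [0,1]^d : ∑ v i ≤ 1}`. -/
def Sd (d : ℕ) : Set (EuclideanSpace ℝ (Fin d)) :=
  {v | (∀ i, v i ∈ Set.Icc (0 : ℝ) 1) ∧ ∑ i, v i ≤ 1}

/-- The probability simplex `P_{d+1} = {u ∈ [0,1]^{d+1} : ∑ u i = 1}`. -/
def Pd (d : ℕ) : Set (Fin (d + 1) → ℝ) :=
  {u | (∀ i, u i ∈ Set.Icc (0 : ℝ) 1) ∧ ∑ i, u i = 1}

/-- `ṽ = (1 - ∑ v i, v 1, …, v d)`. -/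
def tilde {d : ℕ} (v : EuclideanSpace ℝ (Fin d)) : Fin (d + 1) → ℝ :=
  Fin.cons (1 - ∑ i, v i) (fun i => v i)

/-! Let `vₙ ∈ S_d` be the frequency vector `x̄ₙ` without its `0`-th coordinate. Then
`vₙ₊₁ - vₙ = (e_{xₙ₊₁} - vₙ) / (n + 1)`, and the potential condition turns the payoff into a
gradient pairing: `f_{xₙ₊₁}(x̄ₙ) - q(x̄ₙ) = (n + 1) ⟪∇Φ(vₙ), vₙ₊₁ - vₙ⟫`. As the steps shrink this
is `(n + 1) (Φ(vₙ₊₁) - Φ(vₙ))` up to a vanishing error (near the boundary of `S_d`, `Φ` is first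
composed with a slight contraction of `S_d` into its interior). For a bounded sequence `a`, the
Cesàro mean of `(n + 1) (aₙ₊₁ - aₙ)` is `aₙ` minus the Cesàro mean of `a`, and this cannot stay
above `ε` for ever because the harmonic series diverges. Hence the Cesàro means of the payoffs have
`liminf` at most `sup q = Q*`. -/

open Filter Finset Set RealInnerProductSpace

theorem frequently_succ_mul_sub_le {t : ℕ → ℝ} (ht : BddAbove (range t)) {ε : ℝ} (hε : 0 < ε) :
    ∃ᶠ n : ℕ in atTop, ((n : ℝ) + 1) * (t (n + 1) - t n) ≤ ε := by
  by_contra h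
  obtain ⟨N, hN⟩ := eventually_atTop.1 (not_frequently.1 h)
  have hgrowth : ∀ n, N ≤ n → t N + ε * ∑ i ∈ Ico N n, (1 / ((i : ℝ) + 1)) ≤ t n := by
    intro n hn
    induction n, hn using Nat.le_induction with
    | base => simp
    | succ n hn ih =>
      have hstep : ε * (1 / ((n : ℝ) + 1)) ≤ t (n + 1) - t n := by
        rw [mul_one_div, div_le_iff₀ (by positivity)]
        linarith [not_le.1 (hN n hn)]
      rw [sum_Ico_succ_top hn, mul_add]
      linarith
  have hharmonic : Tendsto (fun n => t N + ε * ∑ i ∈ Ico N n, (1 / ((i : ℝ) + 1))) atTop atTop := by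
    refine tendsto_atTop_add_const_left _ _ (Tendsto.const_mul_atTop hε ?_)
    refine (Real.tendsto_sum_range_one_div_nat_succ_atTop.atTop_add
      (tendsto_const_nhds (x := -∑ i ∈ range N, (1 / ((i : ℝ) + 1))))).congr' ?_
    filter_upwards [eventually_ge_atTop N] with n hn
    rw [sum_Ico_eq_sub _ hn]
    ring
  exact not_bddAbove_iff.2 (fun M => by
    obtain ⟨n, hn⟩ := ((tendsto_atTop_mono' atTop (eventually_atTop.2 ⟨N, hgrowth⟩)
      hharmonic).eventually_gt_atTop M).exists
    exact ⟨t n, mem_range_self n, hn⟩) ht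

theorem sum_range_succ_mul_sub (a : ℕ → ℝ) (n : ℕ) :
    ∑ k ∈ range n, ((k : ℝ) + 1) * (a (k + 1) - a k) = n * a n - ∑ k ∈ range n, a k := by
  induction n with
  | zero => simp
  | succ n ih => rw [sum_range_succ, ih, sum_range_succ]; push_cast; ring

theorem frequently_sub_cesaro_le {a : ℕ → ℝ} (ha : BddAbove (range a)) {ε : ℝ} (hε : 0 < ε) :
    ∃ᶠ n : ℕ in atTop, a n - (∑ k ∈ range n, a k) / n ≤ ε := by
  obtain ⟨M, hM⟩ := ha
  set t : ℕ → ℝ := fun n => (∑ k ∈ range n, a k) / n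
  have ht : BddAbove (range t) := by
    refine ⟨max M 0, forall_mem_range.2 fun n => ?_⟩
    rcases n.eq_zero_or_pos with rfl | hn
    · simp [t]
    refine div_le_of_le_mul₀ n.cast_nonneg (le_max_right _ _) ?_
    calc ∑ k ∈ range n, a k ≤ ∑ _k ∈ range n, max M 0 :=
          sum_le_sum fun k _ => (hM (mem_range_self k)).trans (le_max_left _ _)
      _ = max M 0 * n := by simp [mul_comm]
  refine (frequently_succ_mul_sub_le ht hε).mono fun n hn => ?_
  -- `a n - t n = (n + 1) (t (n + 1) - t n)`
  convert hn using 1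
  simp only [t, sum_range_succ]
  push_cast
  rcases n.eq_zero_or_pos with rfl | hn
  · simp
  field_simp
  ring

theorem sum_range_le_of_eventually_nonpos {g : ℕ → ℝ} {N : ℕ} (hg : ∀ k, N ≤ k → g k ≤ 0)
    {n : ℕ} (hn : N ≤ n) : ∑ k ∈ range n, g k ≤ ∑ k ∈ range N, g k := by
  rw [← sum_range_add_sum_Ico _ hn]
  exact add_le_of_nonpos_right (sum_nonpos fun k hk => hg k (mem_Ico.1 hk).1)

theorem liminf_cesaro_le {b : ℕ → ℝ} {c : ℝ} (hb : BddBelow (range b))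
    (h : ∀ ε > 0, ∃ a : ℕ → ℝ, BddAbove (range a) ∧
      ∀ᶠ k : ℕ in atTop, b k ≤ c + ε + ((k : ℝ) + 1) * (a (k + 1) - a k)) :
    liminf (fun n : ℕ => (1 / (n : ℝ)) * ∑ k ∈ range n, b k) atTop ≤ c := by
  obtain ⟨m, hm⟩ := hb
  have hbdd : IsBoundedUnder (· ≥ ·) atTop fun n : ℕ => (1 / (n : ℝ)) * ∑ k ∈ range n, b k := by
    refine isBoundedUnder_of_eventually_ge (a := m) ?_
    filter_upwards [eventually_gt_atTop 0] with n hn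
    rw [one_div_mul_eq_div, le_div_iff₀ (by positivity)]
    simpa [mul_comm] using card_nsmul_le_sum (range n) b m fun k _ => hm (mem_range_self k)
  refine le_of_forall_pos_le_add fun ε hε => liminf_le_of_frequently_le ?_ hbdd
  obtain ⟨a, ha, hab⟩ := h (ε / 3) (by positivity)
  obtain ⟨N, hN⟩ := eventually_atTop.1 hab
  set g : ℕ → ℝ := fun k => b k - (c + ε / 3 + ((k : ℝ) + 1) * (a (k + 1) - a k))
  set K := ∑ k ∈ range N, g k
  have hK : ∀ᶠ n : ℕ in atTop, K / n ≤ ε / 3 :=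
    (tendsto_const_div_atTop_nhds_zero_nat K).eventually (ge_mem_nhds (by positivity))
  refine ((frequently_sub_cesaro_le ha (by positivity : 0 < ε / 3)).and_eventually
    (hK.and (eventually_ge_atTop (max N 1)))).mono fun n ⟨hmean, hKn, hn⟩ => ?_
  have hn1 : (0 : ℝ) < n := by exact_mod_cast (le_max_right N 1).trans hn
  have hsum : ∑ k ∈ range n, b k = n * (c + ε / 3) + (n * a n - ∑ k ∈ range n, a k)
      + ∑ k ∈ range n, g k := by
    simp only [g, ← sum_range_succ_mul_sub, sum_sub_distrib, sum_add_distrib, sum_const, card_range,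
      nsmul_eq_mul]
    ring
  have hg := sum_range_le_of_eventually_nonpos (fun k hk => sub_nonpos.2 (hN k hk))
    ((le_max_left N 1).trans hn)
  rw [sub_div' hn1.ne'] at hmean
  rw [one_div_mul_eq_div, div_le_iff₀ hn1, hsum]
  rw [div_le_iff₀ hn1] at hmean hKn
  nlinarith

theorem Convex.exists_mem_segment_sub_eq_inner {E : Type*} [NormedAddCommGroup E]
    [InnerProductSpace ℝ E] [CompleteSpace E] {s : Set E} (hs : Convex ℝ s) {Φ : E → ℝ}
    {G : E → E} (hgrad : ∀ v ∈ s, HasGradientAt Φ (G v) v) {x y : E} (hx : x ∈ s)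
    (hy : y ∈ s) : ∃ ξ ∈ segment ℝ x y, Φ y - Φ x = ⟪G ξ, y - x⟫ := by
  obtain ⟨ξ, hξ, h⟩ := domain_mvt (fun z hz => (hgrad z hz).hasFDerivAt.hasFDerivWithinAt) hs hx hy
  exact ⟨ξ, hξ, by rw [h, InnerProductSpace.toDual_apply_apply]⟩

theorem dist_le_of_mem_segment_contraction {E : Type*} [NormedAddCommGroup E] [NormedSpace ℝ E]
    {c y y' ξ : E} {θ : ℝ} (hθ0 : 0 ≤ θ) (hθ1 : θ ≤ 1)
    (hξ : ξ ∈ segment ℝ ((1 - θ) • y + θ • c) ((1 - θ) • y' + θ • c)) :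
    dist ξ y ≤ ‖y' - y‖ + θ * dist c y := by
  have hξ' : dist ξ ((1 - θ) • y + θ • c) ≤ ‖y' - y‖ := by
    refine (Metric.mem_closedBall.1 (segment_subset_closedBall_left _ _ hξ)).trans ?_
    rw [dist_comm, dist_eq_norm, show (1 - θ) • y' + θ • c - ((1 - θ) • y + θ • c)
      = (1 - θ) • (y' - y) by module, norm_smul, Real.norm_of_nonneg (by linarith)]
    exact mul_le_of_le_one_left (norm_nonneg _) (by linarith)
  have hy : dist ((1 - θ) • y + θ • c) y = θ * dist c y := by
    rw [dist_eq_norm, dist_eq_norm, show (1 - θ) • y + θ • c - y = θ • (c - y) by module,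
      norm_smul, Real.norm_of_nonneg hθ0]
  linarith [dist_triangle ξ ((1 - θ) • y + θ • c) y]

theorem exists_approx_potential {E : Type*} [NormedAddCommGroup E] [InnerProductSpace ℝ E]
    [CompleteSpace E] {K : Set E} (hK : IsCompact K) (hKconv : Convex ℝ K) {c : E}
    (hc : c ∈ interior K) {Φ : E → ℝ} {G : E → E} (hG : ContinuousOn G K)
    (hgrad : ∀ v ∈ interior K, HasGradientAt Φ (G v) v) {ε : ℝ} (hε : 0 < ε) :
    ∃ ψ : E → ℝ, BddAbove (ψ '' K) ∧ ∃ δ > 0, ∀ y ∈ K, ∀ y' ∈ K, ‖y' - y‖ < δ →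
      ⟪G y, y' - y⟫ ≤ ψ y' - ψ y + ε * ‖y' - y‖ := by
  obtain ⟨δ, hδ, hGδ⟩ := Metric.uniformContinuousOn_iff.1
    (hK.uniformContinuousOn_of_continuous hG) ε hε
  obtain ⟨R, hR⟩ := Metric.isBounded_iff.1 hK.isBounded
  have hcK : c ∈ K := interior_subset hc
  obtain ⟨μ, hμ, hRμ⟩ := exists_pos_mul_lt (half_pos hδ) R
  -- `Φ` is only differentiable inside `K`: use `Φ ∘ T`, where `T` contracts `K` towards `c`
  set θ := min μ (1 / 2)
  have hθ : 0 < θ := lt_min hμ one_half_pos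
  have hθ1 : θ < 1 := (min_le_right _ _).trans_lt one_half_lt_one
  have hθR : θ * R < δ / 2 := by
    have hR0 : 0 ≤ R := dist_self c ▸ hR hcK hcK
    nlinarith [mul_le_mul_of_nonneg_right (min_le_left μ (1 / 2)) hR0]
  set T : E → E := fun y => (1 - θ) • y + θ • c
  have hT : ∀ y ∈ K, T y ∈ interior K := fun y hy =>
    hKconv.combo_self_interior_mem_interior hy hc (by linarith) hθ (by ring)
  refine ⟨fun y => Φ (T y) / (1 - θ), ?_, δ / 2, half_pos hδ, fun y hy y' hy' hyy' => ?_⟩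
  · refine hK.bddAbove_image (ContinuousOn.div_const (fun y hy => ?_) _)
    exact ((hgrad _ (hT y hy)).differentiableAt.continuousAt.comp
      (by fun_prop : Continuous T).continuousAt).continuousWithinAt
  obtain ⟨ξ, hξ, hΦξ⟩ :=
    hKconv.interior.exists_mem_segment_sub_eq_inner hgrad (hT y hy) (hT y' hy')
  rw [show T y' - T y = (1 - θ) • (y' - y) by simp only [T]; module,
    real_inner_smul_right] at hΦξ
  have hξK : ξ ∈ K := interior_subset (hKconv.interior.segment_subset (hT y hy) (hT y' hy') hξ)
  have hξy : dist ξ y < δ := by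
    have := dist_le_of_mem_segment_contraction hθ.le hθ1.le hξ
    nlinarith [mul_le_mul_of_nonneg_left (hR hcK hy) hθ.le]
  have hGξ : ‖G y - G ξ‖ ≤ ε := (dist_eq_norm (G y) (G ξ) ▸ hGδ y hy ξ hξK (by rwa [dist_comm])).le
  calc ⟪G y, y' - y⟫ = ⟪G ξ, y' - y⟫ + ⟪G y - G ξ, y' - y⟫ := by rw [inner_sub_left]; ring
    _ ≤ Φ (T y') / (1 - θ) - Φ (T y) / (1 - θ) + ε * ‖y' - y‖ := by
      gcongr
      · rw [← sub_div, hΦξ, mul_div_cancel_left₀ _ (by linarith)]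
      · exact (real_inner_le_norm _ _).trans (mul_le_mul_of_nonneg_right hGξ (norm_nonneg _))

theorem liminf_cesaro_le_of_le_inner_gradient {E : Type*} [NormedAddCommGroup E]
    [InnerProductSpace ℝ E] [CompleteSpace E] {K : Set E} (hK : IsCompact K)
    (hKconv : Convex ℝ K) (hKint : (interior K).Nonempty) {Φ : E → ℝ} {G : E → E}
    (hG : ContinuousOn G K) (hgrad : ∀ v ∈ interior K, HasGradientAt Φ (G v) v)
    {y : ℕ → E} (hy : ∀ k, y k ∈ K) {R : ℝ}
    (hR : ∀ᶠ k : ℕ in atTop, ‖((k : ℝ) + 1) • (y (k + 1) - y k)‖ ≤ R)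
    {b : ℕ → ℝ} {c : ℝ} (hb : BddBelow (range b))
    (hbG : ∀ᶠ k : ℕ in atTop, b k ≤ c + ⟪G (y k), ((k : ℝ) + 1) • (y (k + 1) - y k)⟫) :
    liminf (fun n : ℕ => (1 / (n : ℝ)) * ∑ k ∈ range n, b k) atTop ≤ c := by
  refine liminf_cesaro_le hb fun ε hε => ?_
  obtain ⟨ψ, hψ, δ, hδ, hψG⟩ := exists_approx_potential hK hKconv hKint.some_mem hG hgrad
    (ε := ε / (|R| + 1)) (by positivity)
  refine ⟨ψ ∘ y, hψ.mono (range_subset_iff.2 fun k => mem_image_of_mem ψ (hy k)), ?_⟩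
  have hsmall : ∀ᶠ k : ℕ in atTop, |R| * (1 / ((k : ℝ) + 1)) < δ := by
    have := (tendsto_one_div_add_atTop_nhds_zero_nat (𝕜 := ℝ)).const_mul |R|
    rw [mul_zero] at this
    exact this.eventually (gt_mem_nhds hδ)
  filter_upwards [hR, hbG, hsmall] with k hRk hbk hk
  have hk0 : (0 : ℝ) < k + 1 := by positivity
  rw [norm_smul, Real.norm_of_nonneg hk0.le] at hRk
  have hstep : ‖y (k + 1) - y k‖ < δ := by
    rw [mul_one_div, div_lt_iff₀ hk0] at hk
    nlinarith [le_abs_self R]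
  have hεR : ε / (|R| + 1) * (((k : ℝ) + 1) * ‖y (k + 1) - y k‖) ≤ ε := by
    rw [div_mul_eq_mul_div, div_le_iff₀ (by positivity)]
    nlinarith [le_abs_self R]
  have hψk := hψG (y k) (hy k) (y (k + 1)) (hy (k + 1)) hstep
  rw [real_inner_smul_right] at hbk
  simp only [Function.comp_apply]
  nlinarith

section Empirical

variable {ι : Type*} [DecidableEq ι] {x : ℕ → ι} {barx : ℕ → ι → ℝ}

theorem empirical_mem_stdSimplex [Fintype ι]
    (hbar : ∀ n, 1 ≤ n → ∀ i,
      barx n i = (1 / (n : ℝ)) * ∑ k ∈ Icc 1 n, (if x k = i then (1 : ℝ) else 0))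
    {n : ℕ} (hn : 1 ≤ n) : barx n ∈ stdSimplex ℝ ι := by
  refine ⟨fun i => ?_, ?_⟩
  · rw [hbar n hn i]
    exact mul_nonneg (by positivity) (sum_nonneg fun k _ => by split_ifs <;> norm_num)
  · have hn' : (n : ℝ) ≠ 0 := by positivity
    simp_rw [hbar n hn, ← mul_sum]
    rw [sum_comm]
    simp [hn']

theorem empirical_succ
    (hbar : ∀ n, 1 ≤ n → ∀ i,
      barx n i = (1 / (n : ℝ)) * ∑ k ∈ Icc 1 n, (if x k = i then (1 : ℝ) else 0))
    {k : ℕ} (hk : 1 ≤ k) :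
    barx (k + 1) = barx k + (1 / ((k : ℝ) + 1)) • (Pi.single (x (k + 1)) 1 - barx k) := by
  ext i
  have hk' : (k : ℝ) ≠ 0 := by positivity
  simp only [Pi.add_apply, Pi.smul_apply, Pi.sub_apply, Pi.single_apply, smul_eq_mul,
    eq_comm (a := i)]
  rw [hbar (k + 1) (by omega), hbar k hk, sum_Icc_succ_top (by omega)]
  push_cast
  field_simp
  ring

end Empirical

theorem IsCompact.bddBelow_range_apply {X ι : Type*} [TopologicalSpace X] [Finite ι] {S : Set X}
    (hS : IsCompact S) {f : ι → X → ℝ} (hf : ∀ i, ContinuousOn (f i) S) {i : ℕ → ι}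
    {u : ℕ → X} (hu : ∀ k, u k ∈ S) : BddBelow (range fun k => f (i k) (u k)) :=
  ((Set.finite_univ.bddBelow_biUnion).2 fun j _ => hS.bddBelow_image (hf j)).mono
    (range_subset_iff.2 fun k => Set.mem_biUnion (mem_univ (i k)) (Set.mem_image_of_mem _ (hu k)))

theorem Fin.sum_succ_sub_zero_mul {d : ℕ} (g w : Fin (d + 1) → ℝ) (hw : ∑ i, w i = 0) :
    ∑ i : Fin d, (g i.succ - g 0) * w i.succ = ∑ i, g i * w i := by
  rw [Fin.sum_univ_succ] at hw ⊢
  simp only [sub_mul, sum_sub_distrib, ← mul_sum]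
  rw [eq_neg_of_add_eq_zero_left hw]
  ring

theorem Pd_eq_stdSimplex (d : ℕ) : Pd d = stdSimplex ℝ (Fin (d + 1)) := by
  ext u
  exact ⟨fun h => ⟨fun i => (h.1 i).1, h.2⟩, fun h => ⟨mem_Icc_of_mem_stdSimplex h, h.2⟩⟩

section Tail

variable {d : ℕ}

def tailEuclidean (d : ℕ) : (Fin (d + 1) → ℝ) →ₗ[ℝ] EuclideanSpace ℝ (Fin d) :=
  (WithLp.linearEquiv 2 ℝ (Fin d → ℝ)).symm.toLinearMap ∘ₗ LinearMap.funLeft ℝ ℝ Fin.succ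

@[simp]
theorem tailEuclidean_apply (u : Fin (d + 1) → ℝ) (i : Fin d) :
    tailEuclidean d u i = u i.succ := rfl

theorem tilde_tailEuclidean {u : Fin (d + 1) → ℝ} (hu : ∑ i, u i = 1) :
    tilde (tailEuclidean d u) = u := by
  rw [Fin.sum_univ_succ] at hu
  conv_rhs => rw [← Fin.cons_self_tail u]
  rw [tilde]
  congr 1
  simp only [tailEuclidean_apply]
  linarith

theorem tailEuclidean_tilde (v : EuclideanSpace ℝ (Fin d)) : tailEuclidean d (tilde v) = v := by
  ext i
  simp [tilde]

theorem tilde_mem_stdSimplex {v : EuclideanSpace ℝ (Fin d)} (hv : v ∈ Sd d) :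
    tilde v ∈ stdSimplex ℝ (Fin (d + 1)) := by
  refine ⟨Fin.cases (by simpa [tilde] using hv.2) fun i => by simpa [tilde] using (hv.1 i).1, ?_⟩
  simp [tilde, Fin.sum_univ_succ]

theorem Sd_eq_image : Sd d = tailEuclidean d '' stdSimplex ℝ (Fin (d + 1)) := by
  ext v
  refine ⟨fun hv => ⟨tilde v, tilde_mem_stdSimplex hv, tailEuclidean_tilde v⟩, ?_⟩
  rintro ⟨u, hu, rfl⟩
  refine ⟨fun i => mem_Icc_of_mem_stdSimplex hu i.succ, ?_⟩
  have hsum := hu.2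
  rw [Fin.sum_univ_succ] at hsum
  simp only [tailEuclidean_apply]
  linarith [hu.1 0]

theorem tailEuclidean_mem_Sd {u : Fin (d + 1) → ℝ} (hu : u ∈ stdSimplex ℝ (Fin (d + 1))) :
    tailEuclidean d u ∈ Sd d :=
  Sd_eq_image ▸ mem_image_of_mem _ hu

variable (d) in
theorem isCompact_Sd : IsCompact (Sd d) := by
  rw [Sd_eq_image]
  exact (isCompact_stdSimplex ℝ _).image (tailEuclidean d).continuous_of_finiteDimensional

variable (d) in
theorem convex_Sd : Convex ℝ (Sd d) := by
  rw [Sd_eq_image]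
  exact (convex_stdSimplex ℝ _).linear_image _

variable (d) in
theorem interior_Sd_nonempty : (interior (Sd d)).Nonempty := by
  set U : Set (EuclideanSpace ℝ (Fin d)) := (⋂ i, {v | 0 < v i}) ∩ {v | ∑ i, v i < 1}
  have hU : IsOpen U :=
    (isOpen_iInter_of_finite fun i => isOpen_lt continuous_const (by fun_prop)).inter
      (isOpen_lt (by fun_prop) continuous_const)
  have hUS : U ⊆ Sd d := fun v hv => by
    simp only [U, mem_inter_iff, mem_iInter, mem_ofPred_eq] at hv
    refine ⟨fun i => ⟨(hv.1 i).le, ?_⟩, hv.2.le⟩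
    linarith [single_le_sum (fun j _ => (hv.1 j).le) (mem_univ i)]
  refine ⟨WithLp.toLp 2 fun _ => 1 / ((d : ℝ) + 1), interior_maximal hUS hU ?_⟩
  simp only [U, mem_inter_iff, mem_iInter, mem_ofPred_eq]
  refine ⟨fun _ => Nat.one_div_pos_of_nat, ?_⟩
  rw [sum_const, card_univ, Fintype.card_fin, nsmul_eq_mul, mul_one_div,
    div_lt_one (by positivity)]
  linarith

theorem inner_tailEuclidean_single_sub {f : Fin (d + 1) → (Fin (d + 1) → ℝ) → ℝ}
    {G : EuclideanSpace ℝ (Fin d) → EuclideanSpace ℝ (Fin d)}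
    (hG : ∀ v ∈ Sd d, ∀ i : Fin d, G v i = f i.succ (tilde v) - f 0 (tilde v))
    {u : Fin (d + 1) → ℝ} (hu : u ∈ stdSimplex ℝ (Fin (d + 1))) (j : Fin (d + 1)) :
    ⟪G (tailEuclidean d u), tailEuclidean d (Pi.single j 1 - u)⟫ = f j u - ∑ i, u i * f i u := by
  have hw : ∑ i, (Pi.single j (1 : ℝ) - u : Fin (d + 1) → ℝ) i = 0 := by
    simp [sum_sub_distrib, hu.2]
  simp only [PiLp.inner_apply, RCLike.inner_apply, conj_trivial, tailEuclidean_apply,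
    hG _ (tailEuclidean_mem_Sd hu), tilde_tailEuclidean hu.2]
  simp_rw [mul_comm _ (_ - f 0 u)]
  rw [Fin.sum_succ_sub_zero_mul (fun i => f i u) _ hw]
  simp [mul_sub, sum_sub_distrib, mul_comm, Pi.single_apply]

end Tail

/-- Main theorem (Benaïm–Ben Arous): under the potential assumption, every strategy `x`
satisfies `Q(x) = liminf_n (1/n) ∑_{k<n} f (x (k+1)) (x̄ k) ≤ Q* = max_{P_{d+1}} q`. -/
theorem bandit_main (d : ℕ)
    (f : Fin (d + 1) → (Fin (d + 1) → ℝ) → ℝ)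
    (hf : ∀ i, ContinuousOn (f i) (Set.Icc (0 : Fin (d + 1) → ℝ) 1))
    (Φ : EuclideanSpace ℝ (Fin d) → ℝ)
    (G : EuclideanSpace ℝ (Fin d) → EuclideanSpace ℝ (Fin d))
    (hGcont : ContinuousOn G (Sd d))
    (hgrad : ∀ v ∈ interior (Sd d), HasGradientAt Φ (G v) v)
    (hG : ∀ v ∈ Sd d, ∀ i : Fin d, G v i = f i.succ (tilde v) - f 0 (tilde v))
    (x : ℕ → Fin (d + 1)) (barx : ℕ → Fin (d + 1) → ℝ)
    (hbar0 : barx 0 ∈ Pd d)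
    (hbar : ∀ n, 1 ≤ n → ∀ i,
      barx n i = (1 / (n : ℝ)) * ∑ k ∈ Finset.Icc 1 n, (if x k = i then (1 : ℝ) else 0))
    (q : (Fin (d + 1) → ℝ) → ℝ) (hq : ∀ u, q u = ∑ i, u i * f i u) :
    Filter.liminf
      (fun n : ℕ => (1 / (n : ℝ)) * ∑ k ∈ Finset.range n, f (x (k + 1)) (barx k))
      Filter.atTop ≤ sSup (q '' Pd d) := by
  have hP : ∀ n, barx n ∈ stdSimplex ℝ (Fin (d + 1)) := fun n =>
    n.eq_zero_or_pos.elim (fun h => h ▸ Pd_eq_stdSimplex d ▸ hbar0) (empirical_mem_stdSimplex hbar)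
  have hQ : ∀ n, q (barx n) ≤ sSup (q '' Pd d) := by
    have hqc : ContinuousOn q (stdSimplex ℝ (Fin (d + 1))) :=
      (continuousOn_finsetSum _ fun i _ => (continuous_apply i).continuousOn.mul
        ((hf i).mono (stdSimplex_subset_Icc ℝ))).congr fun u _ => hq u
    rw [Pd_eq_stdSimplex]
    exact fun n => le_csSup ((isCompact_stdSimplex ℝ _).bddAbove_image hqc) ⟨barx n, hP n, rfl⟩
  have hstep : ∀ k : ℕ, 1 ≤ k →
      ((k : ℝ) + 1) • (tailEuclidean d (barx (k + 1)) - tailEuclidean d (barx k))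
        = tailEuclidean d (Pi.single (x (k + 1)) 1 - barx k) := fun k hk => by
    rw [empirical_succ hbar hk, map_add, map_smul, add_sub_cancel_left, smul_smul,
      mul_one_div_cancel (by positivity), one_smul]
  refine liminf_cesaro_le_of_le_inner_gradient (isCompact_Sd d) (convex_Sd d)
    (interior_Sd_nonempty d) hGcont hgrad (fun n => tailEuclidean_mem_Sd (hP n))
    (R := Metric.diam (Sd d)) ?_
    (isCompact_Icc.bddBelow_range_apply hf fun k => stdSimplex_subset_Icc ℝ (hP k)) ?_
  · filter_upwards [eventually_ge_atTop 1] with k hk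
    rw [hstep k hk, map_sub, ← dist_eq_norm]
    exact Metric.dist_le_diam_of_mem (isCompact_Sd d).isBounded
      (tailEuclidean_mem_Sd (single_mem_stdSimplex ℝ _)) (tailEuclidean_mem_Sd (hP k))
  · filter_upwards [eventually_ge_atTop 1] with k hk
    rw [hstep k hk, inner_tailEuclidean_single_sub hG (hP k), ← hq]
    linarith [hQ k]
end
end

section
/- Under the same potential assumption, if the empirical frequencies bar x_n of a strategy x converge to some bar x_∞ ∈ P_{d+1}, then (1/n) Σ_{k=0}^{n−1} f_{x_{k+1}}(bar x_k) → q(bar x_∞) as n → ∞; in particular Q(x) = q(bar x_∞). -/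
noncomputable section

/-! The average payoff splits over the arms as
`∑ᵢ (1/n) ∑_{k<n} [x (k+1) = i] f i (x̄ k)`. For each arm the indicator weights have Cesàro means
`x̄ n i → x̄_∞ i`, while `f i (x̄ k) → f i (x̄_∞)` by continuity, so each summand tends to
`x̄_∞ i f i (x̄_∞)`, and these add up to `q (x̄_∞)`. -/

open Filter Finset Topology

theorem Filter.Tendsto.cesaro_mul {w g : ℕ → ℝ} {c L : ℝ}
    (hw : IsBoundedUnder (· ≤ ·) atTop (‖w ·‖))
    (hwc : Tendsto (fun n : ℕ => (n : ℝ)⁻¹ * ∑ k ∈ range n, w k) atTop (𝓝 c))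
    (hg : Tendsto g atTop (𝓝 L)) :
    Tendsto (fun n : ℕ => (n : ℝ)⁻¹ * ∑ k ∈ range n, w k * g k) atTop (𝓝 (c * L)) := by
  have hsplit : ∀ n : ℕ, (n : ℝ)⁻¹ * ∑ k ∈ range n, w k * g k
      = (n : ℝ)⁻¹ * (∑ k ∈ range n, w k) * L + (n : ℝ)⁻¹ * ∑ k ∈ range n, w k * (g k - L) := by
    intro n
    simp only [mul_sub, sum_sub_distrib, ← sum_mul]
    ring
  have hnull : Tendsto (fun k => w k * (g k - L)) atTop (𝓝 0) :=
    isBoundedUnder_le_mul_tendsto_zero hw (tendsto_sub_nhds_zero_iff.2 hg)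
  simpa [hsplit] using (hwc.mul_const L).add hnull.cesaro

theorem Finset.sum_eq_sum_sum_ite_mul {ι α R : Type*} [Fintype ι] [DecidableEq ι]
    [NonAssocSemiring R] (s : Finset α) (a : α → ι) (F : ι → α → R) :
    ∑ k ∈ s, F (a k) k = ∑ i, ∑ k ∈ s, (if a k = i then 1 else 0) * F i k := by
  rw [sum_comm]
  simp [ite_mul]

section EmpiricalFrequency

variable {ι : Type*} [DecidableEq ι]

/-- The empirical frequency of `i` among `x 1, …, x n`; it is `0` for `n = 0`. -/
def empiricalFreq (x : ℕ → ι) (n : ℕ) (i : ι) : ℝ :=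
  (1 / (n : ℝ)) * ∑ k ∈ Icc 1 n, (if x k = i then (1 : ℝ) else 0)

theorem empiricalFreq_eq_cesaro (x : ℕ → ι) (n : ℕ) (i : ι) :
    empiricalFreq x n i = (n : ℝ)⁻¹ * ∑ k ∈ range n, (if x (k + 1) = i then (1 : ℝ) else 0) := by
  rw [empiricalFreq, one_div, ← Ico_add_one_right_eq_Icc, sum_Ico_eq_sum_range]
  simp [add_comm]

theorem empiricalFreq_mem_Icc (x : ℕ → ι) (n : ℕ) (i : ι) :
    empiricalFreq x n i ∈ Set.Icc (0 : ℝ) 1 := by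
  have hcount : ∑ k ∈ Icc 1 n, (if x k = i then (1 : ℝ) else 0) ≤ n := by
    calc ∑ k ∈ Icc 1 n, (if x k = i then (1 : ℝ) else 0)
        ≤ ∑ k ∈ Icc 1 n, (1 : ℝ) := sum_le_sum fun k _ => by split_ifs <;> norm_num
      _ = n := by simp
  refine ⟨mul_nonneg (by positivity) (sum_nonneg fun k _ => by split_ifs <;> norm_num), ?_⟩
  rcases n.eq_zero_or_pos with rfl | hn
  · simp [empiricalFreq]
  · rw [empiricalFreq, one_div, inv_mul_le_iff₀ (by exact_mod_cast hn), mul_one]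
    exact hcount

end EmpiricalFrequency

theorem bandit_convergent_case_general (d : ℕ)
    (f : Fin (d + 1) → (Fin (d + 1) → ℝ) → ℝ)
    (hf : ∀ i, ContinuousOn (f i) (Set.Icc (0 : Fin (d + 1) → ℝ) 1))
    (x : ℕ → Fin (d + 1)) (barx : ℕ → Fin (d + 1) → ℝ)
    (hbar : ∀ n, 1 ≤ n → ∀ i,
      barx n i = (1 / (n : ℝ)) * ∑ k ∈ Finset.Icc 1 n, (if x k = i then (1 : ℝ) else 0))
    (q : (Fin (d + 1) → ℝ) → ℝ) (hq : ∀ u, q u = ∑ i, u i * f i u)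
    (xinf : Fin (d + 1) → ℝ)
    (hconv : Filter.Tendsto barx Filter.atTop (nhds xinf)) :
    Filter.Tendsto
      (fun n : ℕ => (1 / (n : ℝ)) * ∑ k ∈ Finset.range n, f (x (k + 1)) (barx k))
      Filter.atTop (nhds (q xinf))
    ∧ Filter.liminf
        (fun n : ℕ => (1 / (n : ℝ)) * ∑ k ∈ Finset.range n, f (x (k + 1)) (barx k))
        Filter.atTop = q xinf := by
  have hbarx : ∀ᶠ n in atTop, barx n = empiricalFreq x n :=
    (eventually_ge_atTop 1).mono fun n hn => funext (hbar n hn)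
  have hmem : ∀ᶠ n in atTop, barx n ∈ Set.Icc 0 1 :=
    hbarx.mono fun n h => h ▸ ⟨fun i => (empiricalFreq_mem_Icc x n i).1,
      fun i => (empiricalFreq_mem_Icc x n i).2⟩
  have hpayoff : ∀ i, Tendsto (fun k => f i (barx k)) atTop (𝓝 (f i xinf)) := fun i =>
    (hf i xinf (isClosed_Icc.mem_of_tendsto hconv hmem)).tendsto.comp
      (tendsto_nhdsWithin_iff.2 ⟨hconv, hmem⟩)
  have hfreq : ∀ i, Tendsto (fun n : ℕ => (n : ℝ)⁻¹ *
      ∑ k ∈ range n, (if x (k + 1) = i then (1 : ℝ) else 0)) atTop (𝓝 (xinf i)) := fun i =>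
    (tendsto_pi_nhds.1 hconv i).congr' <|
      hbarx.mono fun n h => by rw [h, empiricalFreq_eq_cesaro]
  have hweights : ∀ i, IsBoundedUnder (· ≤ ·) atTop
      (fun k => ‖if x (k + 1) = i then (1 : ℝ) else 0‖) := fun i =>
    isBoundedUnder_of ⟨1, fun k => by by_cases h : x (k + 1) = i <;> simp [h]⟩
  have hsplit : ∀ n : ℕ, (1 / (n : ℝ)) * ∑ k ∈ range n, f (x (k + 1)) (barx k) = ∑ i, (n : ℝ)⁻¹ *
      ∑ k ∈ range n, (if x (k + 1) = i then (1 : ℝ) else 0) * f i (barx k) := fun n => by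
    rw [one_div, sum_eq_sum_sum_ite_mul (range n) (x <| · + 1) (fun i k => f i (barx k)), mul_sum]
  have hmain : Tendsto (fun n : ℕ => (1 / (n : ℝ)) * ∑ k ∈ range n, f (x (k + 1)) (barx k))
      atTop (𝓝 (q xinf)) := by
    simp only [hsplit, hq]
    exact tendsto_finsetSum _ fun i _ => (hfreq i).cesaro_mul (hweights i) (hpayoff i)
  exact ⟨hmain, hmain.liminf_eq⟩

/-- If the empirical frequencies `x̄ n` converge to some `x̄_∞ ∈ P_{d+1}`, then the
average payoff `(1/n) ∑_{k<n} f (x (k+1)) (x̄ k)` converges to `q (x̄_∞)`;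
in particular `Q(x) = q (x̄_∞)`. -/
theorem bandit_convergent_case (d : ℕ)
    (f : Fin (d + 1) → (Fin (d + 1) → ℝ) → ℝ)
    (hf : ∀ i, ContinuousOn (f i) (Set.Icc (0 : Fin (d + 1) → ℝ) 1))
    (Φ : EuclideanSpace ℝ (Fin d) → ℝ)
    (G : EuclideanSpace ℝ (Fin d) → EuclideanSpace ℝ (Fin d))
    (hGcont : ContinuousOn G (Sd d))
    (hgrad : ∀ v ∈ interior (Sd d), HasGradientAt Φ (G v) v)
    (hG : ∀ v ∈ Sd d, ∀ i : Fin d, G v i = f i.succ (tilde v) - f 0 (tilde v))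
    (x : ℕ → Fin (d + 1)) (barx : ℕ → Fin (d + 1) → ℝ)
    (hbar0 : barx 0 ∈ Pd d)
    (hbar : ∀ n, 1 ≤ n → ∀ i,
      barx n i = (1 / (n : ℝ)) * ∑ k ∈ Finset.Icc 1 n, (if x k = i then (1 : ℝ) else 0))
    (q : (Fin (d + 1) → ℝ) → ℝ) (hq : ∀ u, q u = ∑ i, u i * f i u)
    (xinf : Fin (d + 1) → ℝ) (hxinf : xinf ∈ Pd d)
    (hconv : Filter.Tendsto barx Filter.atTop (nhds xinf)) :
    Filter.Tendsto
      (fun n : ℕ => (1 / (n : ℝ)) * ∑ k ∈ Finset.range n, f (x (k + 1)) (barx k))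
      Filter.atTop (nhds (q xinf))
    ∧ Filter.liminf
        (fun n : ℕ => (1 / (n : ℝ)) * ∑ k ∈ Finset.range n, f (x (k + 1)) (barx k))
        Filter.atTop = q xinf :=
  bandit_convergent_case_general d f hf x barx hbar q hq xinf hconv

end
end

section
/- For f_0(x) = a x and f_1(x) = b(1−x) with a, b > 0, the empirical frequencies bar x_n of the greedy strategy (play 1 iff f_1(bar x_{n−1}) ≥ f_0(bar x_{n−1})) converge to b/(a+b), and (1/n) Σ_{k=0}^{n−1} f_{x_{k+1}}(bar x_k) → ab/(a+b). -/
/-! Write `c = b/(a+b)` and `Nₙ = n·x̄ₙ` for the number of ones among the first `n` moves.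
Since `a x ≤ b (1 - x) ↔ x ≤ c`, the greedy move is `1` exactly when `Nₙ ≤ n c`, so the
deviation `Nₙ - n c` drifts by `-c` when positive and by `1 - c` otherwise and never leaves
`[-1, 1]`. Hence `|x̄ₙ - c| ≤ 1/n`. The greedy payoff is `max (a x̄ₖ) (b (1 - x̄ₖ))`, which
tends to `max (a c) (b (1 - c)) = ab/(a+b)`, and Cesàro averaging preserves the limit. -/

open Filter Topology Finset

lemma le_crossing_iff {a b : ℝ} (hab : 0 < a + b) (y : ℝ) :
    a * y ≤ b * (1 - y) ↔ y ≤ b / (a + b) := by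
  rw [le_div_iff₀ hab]
  constructor <;> intro h <;> linarith

lemma abs_sub_mul_le_one_of_greedy {c : ℝ} (hc : c ∈ Set.Icc (0 : ℝ) 1) {N : ℕ → ℝ}
    (hN₁ : N 1 ∈ Set.Icc (0 : ℝ) 1)
    (hstep : ∀ n, 1 ≤ n → N (n + 1) = N n + if N n ≤ n * c then 1 else 0) :
    ∀ n, 1 ≤ n → |N n - n * c| ≤ 1 := by
  obtain ⟨hc0, hc1⟩ := hc
  refine Nat.le_induction ?_ fun n hn ih => ?_
  · obtain ⟨h0, h1⟩ := hN₁
    simp only [Nat.cast_one, one_mul, abs_le]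
    constructor <;> linarith
  rw [abs_le] at ih ⊢
  rw [hstep n hn]
  push_cast
  split_ifs <;> constructor <;> linarith

lemma tendsto_of_abs_mul_sub_le {u : ℕ → ℝ} {c C : ℝ}
    (h : ∀ n, 1 ≤ n → |n * u n - n * c| ≤ C) : Tendsto u atTop (𝓝 c) := by
  have hdev : Tendsto (fun n : ℕ => u n - c) atTop (𝓝 0) := by
    refine squeeze_zero_norm' (a := fun n : ℕ => C / n) ?_
      (tendsto_const_div_atTop_nhds_zero_nat C)
    filter_upwards [eventually_ge_atTop 1] with n hn
    have hn0 : (0 : ℝ) < n := by exact_mod_cast hn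
    have := h n hn
    rwa [← mul_sub, abs_mul, abs_of_pos hn0, mul_comm, ← le_div_iff₀ hn0] at this
  simpa using hdev.add_const c

lemma succ_mul_average_eq {x : ℕ → ℕ} {bx : ℕ → ℝ}
    (hbx : ∀ n : ℕ, 1 ≤ n →
      bx n = (1 / (n : ℝ)) * ∑ k ∈ Icc 1 n, (if x k = 1 then (1:ℝ) else 0)) (n : ℕ) :
    ((n + 1 : ℕ) : ℝ) * bx (n + 1) = n * bx n + if x (n + 1) = 1 then 1 else 0 := by
  rw [hbx (n + 1) n.succ_pos]
  rcases Nat.eq_zero_or_pos n with rfl | hn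
  · rw [Icc_self, sum_singleton]
    simp
  · rw [hbx n hn, sum_Icc_succ_top (by omega)]
    have : (n : ℝ) ≠ 0 := by positivity
    field_simp

lemma greedy_payoff_eq_max (p q : ℝ) :
    (if (if p ≤ q then 1 else 0 : ℕ) = 1 then q else p) = max p q := by
  split_ifs with hpq <;> simp_all [le_of_not_ge]

lemma max_payoffs_at_crossing {a b : ℝ} (hab : 0 < a + b) :
    max (a * (b / (a + b))) (b * (1 - b / (a + b))) = a * b / (a + b) := by
  have : b * (1 - b / (a + b)) = a * (b / (a + b)) := by field_simp; ring
  rw [this, max_self, mul_div_assoc]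

theorem greedy_dynamics_limit_general (a b : ℝ) (ha : 0 < a) (hb : 0 < b)
    (x : ℕ → ℕ) (bx : ℕ → ℝ)
    (hbx : ∀ n : ℕ, 1 ≤ n →
      bx n = (1 / (n : ℝ)) * ∑ k ∈ Finset.Icc 1 n, (if x k = 1 then (1:ℝ) else 0))
    (hgreedy : ∀ n, x (n + 1) = if a * bx n ≤ b * (1 - bx n) then 1 else 0) :
    Filter.Tendsto bx Filter.atTop (nhds (b / (a + b)))
    ∧ Filter.Tendsto
        (fun n : ℕ => (1 / (n : ℝ)) * ∑ k ∈ Finset.range n,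
          (if x (k + 1) = 1 then b * (1 - bx k) else a * bx k))
        Filter.atTop (nhds (a * b / (a + b))) := by
  have hab : 0 < a + b := by positivity
  set c := b / (a + b) with hc_def
  have hc : c ∈ Set.Icc (0 : ℝ) 1 :=
    ⟨by positivity, (div_le_one hab).2 (by linarith)⟩
  have hmove (n : ℕ) :
      (if x (n + 1) = 1 then (1 : ℝ) else 0) = if bx n ≤ c then 1 else 0 := by
    by_cases h : bx n ≤ c <;> simp [hgreedy, le_crossing_iff hab, ← hc_def, h]
  -- The first move is decided by the arbitrary `bx 0`, not by `0 * bx 0`, so the count is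
  -- tracked from time 1 on.
  have hN₁ : ((0 + 1 : ℕ) : ℝ) * bx (0 + 1) ∈ Set.Icc (0 : ℝ) 1 := by
    rw [succ_mul_average_eq hbx]
    split_ifs <;> simp
  have hdev := abs_sub_mul_le_one_of_greedy hc (N := fun n => n * bx n) (by simpa using hN₁)
    (fun n hn => by
      have hn0 : (0 : ℝ) < n := by exact_mod_cast hn
      simp only [succ_mul_average_eq hbx, hmove, mul_le_mul_iff_right₀ hn0])
  have hfreq : Tendsto bx atTop (𝓝 c) := tendsto_of_abs_mul_sub_le hdev
  refine ⟨hfreq, ?_⟩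
  have hmax : Tendsto (fun k => max (a * bx k) (b * (1 - bx k))) atTop
      (𝓝 (a * b / (a + b))) := by
    rw [← max_payoffs_at_crossing hab]
    exact (tendsto_const_nhds.mul hfreq).max
      (tendsto_const_nhds.mul (tendsto_const_nhds.sub hfreq))
  refine hmax.cesaro.congr fun n => ?_
  simp only [one_div, hgreedy, greedy_payoff_eq_max]

/-- For `f₀ x = a x`, `f₁ x = b (1-x)` with `a, b > 0`, the empirical frequencies of the
greedy strategy converge to `b/(a+b)` and the average payoff converges to `ab/(a+b)`. -/
theorem greedy_dynamics_limit (a b : ℝ) (ha : 0 < a) (hb : 0 < b)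
    (x : ℕ → ℕ) (bx : ℕ → ℝ) (hbx0 : bx 0 ∈ Set.Icc (0:ℝ) 1)
    (hbx : ∀ n : ℕ, 1 ≤ n →
      bx n = (1 / (n : ℝ)) * ∑ k ∈ Finset.Icc 1 n, (if x k = 1 then (1:ℝ) else 0))
    (hgreedy : ∀ n, x (n + 1) = if a * bx n ≤ b * (1 - bx n) then 1 else 0) :
    Filter.Tendsto bx Filter.atTop (nhds (b / (a + b)))
    ∧ Filter.Tendsto
        (fun n : ℕ => (1 / (n : ℝ)) * ∑ k ∈ Finset.range n,
          (if x (k + 1) = 1 then b * (1 - bx k) else a * bx k))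
        Filter.atTop (nhds (a * b / (a + b))) :=
  greedy_dynamics_limit_general a b ha hb x bx hbx hgreedy
end
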